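/- In o(2,n) realized with the quadratic form 2x_1 x_{n+2} + 2x_2 x_{n+1} + x_3^2 + ... + x_n^2, the set u_max of strictly upper-triangular matrices of the indicated block form is a Lie subalgebra isomorphic to the semidirect product R ⋉ heis^C(2n-3), where the ideal u_max ∩ {t = 0} is isomorphic to heis^C(2n-3) and the R-factor acts by the derivation (u + iv) + αZ ↦ v + 0·Z. -/
import Mathlib
set_option maxHeartbeats 1000000


open Matrix

/-- Index set for `(n+2) × (n+2)` matrices in blocks of sizes `2, n-2, 2`
(coordinates `x₁, x₂, x₃,…,xₙ, x_{n+1}, x_{n+2}`; here `m = n-2`). -/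
abbrev Idx2 (m : ℕ) := Fin 2 ⊕ Fin m ⊕ Fin 2

/-- The matrix of the quadratic form `2x₁x_{n+2} + 2x₂x_{n+1} + x₃² + ⋯ + xₙ²`
of signature `(2,n)`. -/
def qJ (m : ℕ) : Matrix (Idx2 m) (Idx2 m) ℝ := fun i j =>
  match i, j with
  | Sum.inl a, Sum.inr (Sum.inr b) => if (a : ℕ) + (b : ℕ) = 1 then 1 else 0
  | Sum.inr (Sum.inr a), Sum.inl b => if (a : ℕ) + (b : ℕ) = 1 then 1 else 0
  | Sum.inr (Sum.inl i), Sum.inr (Sum.inl j) => if i = j then 1 else 0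
  | _, _ => 0

/-- The strictly upper-triangular matrices of `u_max ⊆ o(2,n)`, with parameters
`t, u, v, α` (first row `(0, t, u, α, 0)`, second row `(0, 0, v, 0, -α)`, middle rows
ending with `(-vᵀ, -uᵀ)`, and entry `-t` in position `(n+1, n+2)`). -/
def Um (m : ℕ) (t : ℝ) (u v : Fin m → ℝ) (α : ℝ) : Matrix (Idx2 m) (Idx2 m) ℝ :=
  fun i j =>
  match i, j with
  | Sum.inl a, Sum.inl b => if (a : ℕ) = 0 ∧ (b : ℕ) = 1 then t else 0
  | Sum.inl a, Sum.inr (Sum.inl j) => if (a : ℕ) = 0 then u j else v j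
  | Sum.inl a, Sum.inr (Sum.inr b) =>
      if (a : ℕ) = 0 ∧ (b : ℕ) = 0 then α
      else if (a : ℕ) = 1 ∧ (b : ℕ) = 1 then -α else 0
  | Sum.inr (Sum.inl i), Sum.inr (Sum.inr b) => if (b : ℕ) = 0 then -v i else -u i
  | Sum.inr (Sum.inr a), Sum.inr (Sum.inr b) =>
      if (a : ℕ) = 0 ∧ (b : ℕ) = 1 then -t else 0
  | _, _ => 0

/-- In `o(2,n)` (for the quadratic form `2x₁x_{n+2} + 2x₂x_{n+1} + x₃² + ⋯ + xₙ²`,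
`n = m+2 ≥ 3`), the set `u_max` of strictly upper-triangular matrices `Um t u v α` is a
Lie subalgebra isomorphic to `ℝ ⋉ heis^ℂ(2n-3)`: each `Um t u v α` lies in `o(2,n)`,
the parametrization is injective, and the bracket is given by
`[Um t u v α, Um t' u' v' α'] = Um 0 (t•v' - t'•v) 0 (∑ (u'ⱼvⱼ - uⱼv'ⱼ))`.
In particular `{t = 0}` is a codimension-one ideal isomorphic to the Heisenberg algebra
`heis^ℂ(2n-3)` (with `(u,v,α) ↔ (u + iv) + αZ` and `[z,z'] = ω_ℂ(z,z')Z`), on which the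
`ℝ`-factor acts by the derivation `(u + iv) + αZ ↦ v + 0·Z`. -/
theorem umax_semidirect_heisenberg (m : ℕ) (hm : 1 ≤ m) :
    (∀ (t α : ℝ) (u v : Fin m → ℝ),
        (Um m t u v α)ᵀ * qJ m + qJ m * Um m t u v α = 0) ∧
      (∀ (t α : ℝ) (u v : Fin m → ℝ), Um m t u v α = 0 → t = 0 ∧ u = 0 ∧ v = 0 ∧ α = 0) ∧
      (∀ (t t' α α' : ℝ) (u v u' v' : Fin m → ℝ),
        ⁅Um m t u v α, Um m t' u' v' α'⁆ =
          Um m 0 (t • v' - t' • v) 0 (∑ j, (u' j * v j - u j * v' j))) := by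
  refine ⟨?_, ?_, ?_⟩
  · intro t α u v
    ext i j
    rcases i with a | i | a <;> rcases j with b | j | b
    all_goals try fin_cases a
    all_goals try fin_cases b
    all_goals
      simp [Matrix.mul_apply, Matrix.add_apply, Matrix.transpose_apply, qJ, Um,
        Fintype.sum_sum_type, Fin.sum_univ_two, Finset.mul_sum, mul_ite]
  · intro t α u v h
    refine ⟨?_, ?_, ?_, ?_⟩
    · have := congrFun (congrFun h (Sum.inl 0)) (Sum.inl 1)
      simpa [Um] using this
    · ext j
      have := congrFun (congrFun h (Sum.inl 0)) (Sum.inr (Sum.inl j))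
      simpa [Um] using this
    · ext j
      have := congrFun (congrFun h (Sum.inl 1)) (Sum.inr (Sum.inl j))
      simpa [Um] using this
    · have := congrFun (congrFun h (Sum.inl 0)) (Sum.inr (Sum.inr 0))
      simpa [Um] using this
  · intro t t' α α' u v u' v'
    ext i j
    rcases i with a | i | a <;> rcases j with b | j | b
    all_goals try fin_cases a
    all_goals try fin_cases b
    all_goals
      simp [Ring.lie_def, Matrix.mul_apply, Matrix.sub_apply, Um,
        Fintype.sum_sum_type, Fin.sum_univ_two, Finset.sum_sub_distrib]
    all_goals simp only [mul_comm]
    all_goals ring
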